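/- Let X_1, X_2, ... be an i.i.d. sequence of real-valued random variables with common distribution function F, and let F_n denote the empirical distribution function of the first n observations. Fix p ∈ (0,1). Then almost surely, limsup_{n→∞} rq_{F_n}(p) = rq_F(p) and liminf_{n→∞} rq_{F_n}(p) = lq_F(p). -/

import Mathlib

/-!
By the strong law of large numbers, `F_n x → F x` almost surely at each fixed `x`, so `F_n x`
eventually lies on the same side of `p` as `F x` whenever `F x ≠ p`. Where `F x = p`, the
centred counts `n (F_n x - p)` form a martingale whose increments are bounded and bounded away
from zero; such a martingale can neither converge nor stay bounded on one side, so `F_n x` falls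
below and rises above `p` infinitely often. Restricting to the countably many rational `x`, the
right sample quantile is eventually below every rational above `rq F p` and infinitely often
above every rational below it, and symmetrically it is infinitely often below every rational
above `lq F p` and eventually above every rational below it.
-/

open MeasureTheory ProbabilityTheory Filter

/-- Left quantile of a distribution function `F` at level `p`:
`lq F p = inf {x | F x ≥ p}`. -/
noncomputable def lq (F : ℝ → ℝ) (p : ℝ) : ℝ := sInf {x : ℝ | p ≤ F x}

/-- Right quantile of a distribution function `F` at level `p`:
`rq F p = inf {x | F x > p}`. -/
noncomputable def rq (F : ℝ → ℝ) (p : ℝ) : ℝ := sInf {x : ℝ | p < F x}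

/-- Empirical distribution function of the first `n` observations `X 0, ..., X (n-1)`:
`edf X n ω x = (1/n) * #{i < n | X i ω ≤ x}`. -/
noncomputable def edf {Ω : Type*} (X : ℕ → Ω → ℝ) (n : ℕ) (ω : Ω) (x : ℝ) : ℝ :=
  ((Finset.range n).filter (fun i => X i ω ≤ x)).card / n

open scoped Topology NNReal

section Quantile

variable {G : ℝ → ℝ} {p a b z : ℝ}

lemma mem_lowerBounds_setOf_lt (hG : Monotone G) (ha : G a ≤ p) :
    a ∈ lowerBounds {x | p < G x} :=
  fun _ hy => le_of_not_gt fun h => ((hG h.le).trans ha).not_gt hy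

lemma mem_lowerBounds_setOf_le (hG : Monotone G) (ha : G a < p) :
    a ∈ lowerBounds {x | p ≤ G x} :=
  fun _ hy => le_of_not_gt fun h => ((hG h.le).trans_lt ha).not_ge hy

lemma rq_le (hG : Monotone G) (ha : G a ≤ p) (hb : p < G b) : rq G p ≤ b :=
  csInf_le ⟨a, mem_lowerBounds_setOf_lt hG ha⟩ hb

lemma le_rq (hG : Monotone G) (ha : G a ≤ p) (hb : p < G b) : a ≤ rq G p :=
  le_csInf ⟨b, hb⟩ (mem_lowerBounds_setOf_lt hG ha)

lemma lq_le (hG : Monotone G) (ha : G a < p) (hb : p ≤ G b) : lq G p ≤ b :=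
  csInf_le ⟨a, mem_lowerBounds_setOf_le hG ha⟩ hb

lemma apply_le_of_lt_rq (hG : Monotone G) (ha : G a ≤ p) (hz : z < rq G p) : G z ≤ p :=
  le_of_not_gt fun h => (rq_le hG ha h).not_gt hz

lemma apply_lt_of_lt_lq (hG : Monotone G) (ha : G a < p) (hz : z < lq G p) : G z < p :=
  lt_of_not_ge fun h => (lq_le hG ha h).not_gt hz

lemma lt_apply_of_rq_lt (hG : Monotone G) (ha : G a ≤ p) (hb : p < G b) (hz : rq G p < z) :
    p < G z := by
  obtain ⟨y, hy, hyz⟩ := (csInf_lt_iff ⟨a, mem_lowerBounds_setOf_lt hG ha⟩ ⟨b, hb⟩).1 hz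
  exact hy.trans_le (hG hyz.le)

lemma le_apply_of_lq_lt (hG : Monotone G) (ha : G a < p) (hb : p ≤ G b) (hz : lq G p < z) :
    p ≤ G z := by
  obtain ⟨y, hy, hyz⟩ := (csInf_lt_iff ⟨a, mem_lowerBounds_setOf_le hG ha⟩ ⟨b, hb⟩).1 hz
  exact hy.trans (hG hyz.le)

end Quantile

section SampleQuantile

variable {G : ℕ → ℝ → ℝ} {F : ℝ → ℝ} {p : ℝ}

theorem limsup_rq_eq_rq_and_liminf_rq_eq_lq (hG : ∀ n, Monotone (G n)) (hF : Monotone F)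
    {a b : ℚ} (ha : F a < p) (hb : p < F b)
    (hlim : ∀ q : ℚ, Tendsto (fun n => G n q) atTop (𝓝 (F q)))
    (hosc : ∀ q : ℚ, F q = p → (∃ᶠ n in atTop, G n q < p) ∧ ∃ᶠ n in atTop, p < G n q) :
    limsup (fun n => rq (G n) p) atTop = rq F p ∧
      liminf (fun n => rq (G n) p) atTop = lq F p := by
  have hGa : ∀ᶠ n in atTop, G n a < p := (hlim a).eventually_lt_const ha
  have hGb : ∀ᶠ n in atTop, p < G n b := (hlim b).eventually_const_lt hb
  have hle (q : ℚ) (hq : F q ≤ p) : ∃ᶠ n in atTop, G n q ≤ p := by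
    rcases hq.eq_or_lt with hq | hq
    · exact (hosc q hq).1.mono fun _ => le_of_lt
    · exact ((hlim q).eventually_lt_const hq).frequently.mono fun _ => le_of_lt
  have hlt (q : ℚ) (hq : p ≤ F q) : ∃ᶠ n in atTop, p < G n q := by
    rcases hq.eq_or_lt with hq | hq
    · exact (hosc q hq.symm).2
    · exact ((hlim q).eventually_const_lt hq).frequently
  have hbdd : ∀ᶠ n in atTop, (a : ℝ) ≤ rq (G n) p ∧ rq (G n) p ≤ b := by
    filter_upwards [hGa, hGb] with n ha hb
    exact ⟨le_rq (hG n) ha.le hb, rq_le (hG n) ha.le hb⟩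
  have hbddAbove : IsBoundedUnder (· ≤ ·) atTop fun n => rq (G n) p :=
    isBoundedUnder_of_eventually_le (hbdd.mono fun _ h => h.2)
  have hbddBelow : IsBoundedUnder (· ≥ ·) atTop fun n => rq (G n) p :=
    isBoundedUnder_of_eventually_ge (hbdd.mono fun _ h => h.1)
  refine ⟨le_antisymm ?_ ?_, le_antisymm ?_ ?_⟩
  · refine le_of_forall_lt_rat_imp_le fun q hq => limsup_le_of_le hbddBelow.isCoboundedUnder_le ?_
    filter_upwards [(hlim q).eventually_const_lt (lt_apply_of_rq_lt hF ha.le hb hq), hGa]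
      with n hq ha
    exact rq_le (hG n) ha.le hq
  · refine le_of_forall_rat_lt_imp_le fun q hq => le_limsup_of_frequently_le ?_ hbddAbove
    exact ((hle q (apply_le_of_lt_rq hF ha.le hq)).and_eventually hGb).mono
      fun n h => le_rq (hG n) h.1 h.2
  · refine le_of_forall_lt_rat_imp_le fun q hq => liminf_le_of_frequently_le ?_ hbddBelow
    exact ((hlt q (le_apply_of_lq_lt hF ha hb.le hq)).and_eventually hGa).mono
      fun n h => rq_le (hG n) h.2.le h.1
  · refine le_of_forall_rat_lt_imp_le fun q hq => le_liminf_of_le hbddAbove.isCoboundedUnder_ge ?_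
    filter_upwards [(hlim q).eventually_lt_const (apply_lt_of_lt_lq hF ha hq), hGb]
      with n hq hb
    exact le_rq (hG n) hq.le hb

end SampleQuantile

lemma Filter.frequently_lt_of_not_bddBelow {α : Type*} [LinearOrder α] {u : ℕ → α}
    (h : ¬BddBelow (Set.range u)) (c : α) : ∃ᶠ n in atTop, u n < c := by
  refine fun hc => h (isBoundedUnder_of_eventually_ge (a := c) ?_).bddBelow_range
  simpa only [not_lt] using hc

lemma Filter.frequently_gt_of_not_bddAbove {α : Type*} [LinearOrder α] {u : ℕ → α}
    (h : ¬BddAbove (Set.range u)) (c : α) : ∃ᶠ n in atTop, c < u n :=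
  Filter.frequently_lt_of_not_bddBelow (α := αᵒᵈ) h c

lemma not_tendsto_of_le_abs_sub {u : ℕ → ℝ} {ε c : ℝ} (hε : 0 < ε)
    (hu : ∀ n, ε ≤ |u (n + 1) - u n|) : ¬Tendsto u atTop (𝓝 c) := by
  intro hc
  have hdiff : Tendsto (fun n => |u (n + 1) - u n|) atTop (𝓝 0) := by
    simpa using ((hc.comp (tendsto_add_atTop_nat 1)).sub hc).abs
  obtain ⟨n, hn⟩ := (hdiff.eventually_lt_const hε).exists
  exact (hu n).not_gt hn

section Martingale

variable {Ω : Type*} [MeasurableSpace Ω] {μ : Measure Ω}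

theorem ProbabilityTheory.iIndepFun.martingale_sum_range_succ {E : Type*} [NormedAddCommGroup E]
    [NormedSpace ℝ E] [CompleteSpace E] [MeasurableSpace E] [BorelSpace E]
    [SecondCountableTopology E] {Z : ℕ → Ω → E}
    (hZ : ∀ i, StronglyMeasurable (Z i)) (hindep : iIndepFun Z μ)
    (hint : ∀ i, Integrable (Z i) μ) (hmean : ∀ i, μ[Z i] = 0) :
    Martingale (fun n ω => ∑ i ∈ Finset.range (n + 1), Z i ω) (Filtration.natural Z hZ) μ := by
  have := hindep.isProbabilityMeasure
  refine martingale_of_condExp_sub_eq_zero_nat (fun n => ?_)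
    (fun n => integrable_finsetSum _ fun i _ => hint i) fun n => ?_
  · refine Finset.stronglyMeasurable_fun_sum _ fun i hi => ?_
    exact (Filtration.stronglyAdapted_natural hZ i).mono
      (Filtration.mono _ (Finset.mem_range_succ_iff.1 hi))
  · have hstep : (fun ω => ∑ i ∈ Finset.range (n + 1 + 1), Z i ω) -
        (fun ω => ∑ i ∈ Finset.range (n + 1), Z i ω) = Z (n + 1) := by
      ext ω
      simp [Finset.sum_range_succ_sub_sum]
    rw [hstep]
    simpa only [hmean, Pi.zero_def] using hindep.condExp_natural_ae_eq_of_lt hZ (n.lt_add_one)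

theorem MeasureTheory.Martingale.ae_not_bddAbove_and_not_bddBelow [IsFiniteMeasure μ]
    {f : ℕ → Ω → ℝ} {ℱ : Filtration ℕ ‹MeasurableSpace Ω›} (hf : Martingale f ℱ μ) {R : ℝ≥0}
    {ε : ℝ} (hε : 0 < ε)
    (hinc : ∀ᵐ ω ∂μ, ∀ i, ε ≤ |f (i + 1) ω - f i ω| ∧ |f (i + 1) ω - f i ω| ≤ R) :
    ∀ᵐ ω ∂μ, ¬BddAbove (Set.range fun n => f n ω) ∧ ¬BddBelow (Set.range fun n => f n ω) := by
  have hbdd : ∀ᵐ ω ∂μ, ∀ i, |f (i + 1) ω - f i ω| ≤ R := hinc.mono fun _ h i => (h i).2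
  filter_upwards [hf.bddAbove_range_iff_bddBelow_range hbdd,
    hf.submartingale.bddAbove_iff_exists_tendsto hbdd, hinc] with ω hiff hconv hω
  have hdiv : ¬∃ c, Tendsto (fun n => f n ω) atTop (𝓝 c) := fun ⟨_, hc⟩ =>
    not_tendsto_of_le_abs_sub hε (fun i => (hω i).1) hc
  exact ⟨fun h => hdiv (hconv.1 h), fun h => hdiv (hconv.1 (hiff.2 h))⟩

end Martingale

section EmpiricalDistribution

lemma edf_mono {Ω : Type*} (X : ℕ → Ω → ℝ) (n : ℕ) (ω : Ω) : Monotone (edf X n ω) :=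
  fun x y hxy => by
    unfold edf
    gcongr

lemma edf_eq_sum_indicator {Ω : Type*} (X : ℕ → Ω → ℝ) (n : ℕ) (ω : Ω) (x : ℝ) :
    edf X n ω x = (∑ i ∈ Finset.range n, (Set.Iic x).indicator (1 : ℝ → ℝ) (X i ω)) / n := by
  simp [edf, Set.indicator_apply, Finset.sum_boole]

lemma edf_succ_sub_eq {Ω : Type*} (X : ℕ → Ω → ℝ) (n : ℕ) (ω : Ω) (x p : ℝ) :
    edf X (n + 1) ω x - p =
      (∑ i ∈ Finset.range (n + 1), ((Set.Iic x).indicator (1 : ℝ → ℝ) (X i ω) - p)) / (n + 1) := by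
  rw [edf_eq_sum_indicator, Finset.sum_sub_distrib]
  push_cast
  field_simp
  simp

variable {Ω : Type*} [MeasurableSpace Ω] {μ : Measure Ω}

lemma cdf_map_apply [IsProbabilityMeasure μ] {Y : Ω → ℝ} (hY : Measurable Y) (x : ℝ) :
    cdf (μ.map Y) x = μ.real {ω | Y ω ≤ x} := by
  have := Measure.isProbabilityMeasure_map (μ := μ) hY.aemeasurable
  rw [cdf_eq_real, measureReal_def, measureReal_def, Measure.map_apply hY measurableSet_Iic]
  rfl

lemma integrable_indicator_Iic_comp [IsFiniteMeasure μ] {Y : Ω → ℝ} (hY : Measurable Y)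
    (x : ℝ) : Integrable (fun ω => (Set.Iic x).indicator (1 : ℝ → ℝ) (Y ω)) μ :=
  (integrable_const (1 : ℝ)).indicator (hY measurableSet_Iic)

lemma integral_indicator_Iic_comp [IsProbabilityMeasure μ] {Y : Ω → ℝ} (hY : Measurable Y)
    (x : ℝ) : ∫ ω, (Set.Iic x).indicator (1 : ℝ → ℝ) (Y ω) ∂μ = cdf (μ.map Y) x := by
  rw [cdf_map_apply hY]
  exact integral_indicator_one (hY measurableSet_Iic)

variable {X : ℕ → Ω → ℝ}

lemma ae_tendsto_edf [IsProbabilityMeasure μ] (hmeas : ∀ i, Measurable (X i))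
    (hindep : Pairwise fun i j => IndepFun (X i) (X j) μ)
    (hident : ∀ i, IdentDistrib (X i) (X 0) μ μ) (x : ℝ) :
    ∀ᵐ ω ∂μ, Tendsto (fun n => edf X n ω x) atTop (𝓝 (cdf (μ.map (X 0)) x)) := by
  have hg : Measurable ((Set.Iic x).indicator (1 : ℝ → ℝ)) :=
    measurable_one.indicator measurableSet_Iic
  have h := strong_law_ae_real (fun i ω => (Set.Iic x).indicator (1 : ℝ → ℝ) (X i ω))
    (integrable_indicator_Iic_comp (hmeas 0) x) (fun i j hij => (hindep hij).comp hg hg)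
    fun i => (hident i).comp hg
  rw [integral_indicator_Iic_comp (hmeas 0)] at h
  simpa only [edf_eq_sum_indicator] using h

lemma ae_frequently_edf_lt_and_gt (hmeas : ∀ i, Measurable (X i)) (hindep : iIndepFun X μ)
    (hident : ∀ i, IdentDistrib (X i) (X 0) μ μ) {p x : ℝ} (hp : p ∈ Set.Ioo 0 1)
    (hx : cdf (μ.map (X 0)) x = p) :
    ∀ᵐ ω ∂μ, (∃ᶠ n in atTop, edf X n ω x < p) ∧ ∃ᶠ n in atTop, p < edf X n ω x := by
  have := hindep.isProbabilityMeasure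
  set g : ℝ → ℝ := fun r => (Set.Iic x).indicator (1 : ℝ → ℝ) r - p
  have hg : Measurable g := (measurable_one.indicator measurableSet_Iic).sub_const p
  have hmean (i : ℕ) : μ[g ∘ X i] = 0 := by
    rw [((hident i).comp hg).integral_eq]
    change ∫ ω, (Set.Iic x).indicator (1 : ℝ → ℝ) (X 0 ω) - p ∂μ = 0
    rw [integral_sub (integrable_indicator_Iic_comp (hmeas 0) x) (integrable_const p),
      integral_const, probReal_univ, one_smul, integral_indicator_Iic_comp (hmeas 0) x, hx,
      sub_self]
  have hmart := (hindep.comp (fun _ => g) fun _ => hg).martingale_sum_range_succ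
    (fun i => (hg.comp (hmeas i)).stronglyMeasurable)
    (fun i => (integrable_indicator_Iic_comp (hmeas i) x).sub (integrable_const p)) hmean
  have hinc (r : ℝ) : min p (1 - p) ≤ |g r| ∧ |g r| ≤ ((1 : ℝ≥0) : ℝ) := by
    by_cases hr : r ≤ x <;> simp [g, hr, abs_of_pos hp.1, abs_of_pos (sub_pos.2 hp.2)] <;>
      linarith [hp.1, hp.2]
  filter_upwards [hmart.ae_not_bddAbove_and_not_bddBelow (lt_min hp.1 (sub_pos.2 hp.2))
    (R := 1) (ae_of_all _ fun ω i => by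
      simpa [Finset.sum_range_succ_sub_sum] using hinc (X (i + 1) ω))]
    with ω ⟨hA, hB⟩
  constructor
  · refine (tendsto_add_atTop_nat 1).frequently
      ((frequently_lt_of_not_bddBelow hB 0).mono fun n hn => ?_)
    rw [← sub_neg, edf_succ_sub_eq]
    exact div_neg_of_neg_of_pos hn (by positivity)
  · refine (tendsto_add_atTop_nat 1).frequently
      ((frequently_gt_of_not_bddAbove hA 0).mono fun n hn => ?_)
    rw [← sub_pos, edf_succ_sub_eq]
    exact div_pos hn (by positivity)

end EmpiricalDistribution

/-- Almost surely, the limsup of the right sample quantiles equals `rq F p` and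
their liminf equals `lq F p`. -/
theorem limsup_liminf_right_sample_quantile
    {Ω : Type*} [MeasurableSpace Ω] (μ : Measure Ω) [IsProbabilityMeasure μ]
    (X : ℕ → Ω → ℝ) (hmeas : ∀ i, Measurable (X i))
    (hindep : iIndepFun X μ)
    (hident : ∀ i, IdentDistrib (X i) (X 0) μ μ)
    (F : ℝ → ℝ) (hF : ∀ x, F x = (μ {ω | X 0 ω ≤ x}).toReal)
    (p : ℝ) (hp : p ∈ Set.Ioo (0 : ℝ) 1) :
    ∀ᵐ ω ∂μ, Filter.limsup (fun n => rq (edf X n ω) p) atTop = rq F p ∧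
      Filter.liminf (fun n => rq (edf X n ω) p) atTop = lq F p := by
  obtain rfl : F = cdf (μ.map (X 0)) :=
    funext fun x => (hF x).trans (cdf_map_apply (hmeas 0) x).symm
  obtain ⟨a, ha⟩ := (((tendsto_cdf_atBot _).comp
    (tendsto_ratCast_atBot_iff.2 tendsto_id)).eventually_lt_const hp.1).exists
  obtain ⟨b, hb⟩ := (((tendsto_cdf_atTop _).comp
    (tendsto_ratCast_atTop_iff.2 tendsto_id)).eventually_const_lt hp.2).exists
  have hlim := ae_all_iff.2 fun q : ℚ =>
    ae_tendsto_edf hmeas (fun i j hij => hindep.indepFun hij) hident q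
  have hosc := ae_all_iff.2 fun q : ℚ =>
    eventually_imp_distrib_left.2 (ae_frequently_edf_lt_and_gt hmeas hindep hident (x := q) hp)
  filter_upwards [hlim, hosc] with ω hlimω hoscω
  exact limsup_rq_eq_rq_and_liminf_rq_eq_lq (edf_mono X · ω) (monotone_cdf _) ha hb hlimω hoscω
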